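/- Let τ and σ be π-compatible topologies on a set X. Then a subset A ⊆ X has the Baire property in (X, τ) if and only if it has the Baire property in (X, σ). -/

import Mathlib

open Topology Set

/-- Topologies `τ` and `σ` on `X` are π-compatible if each is a π-network for the
other: every nonempty open set of either topology contains a nonempty open set of
the other topology. -/
def PiCompatible {X : Type*} (τ σ : TopologicalSpace X) : Prop :=
  (∀ O : Set X, IsOpen[σ] O → O.Nonempty → ∃ V : Set X, IsOpen[τ] V ∧ V.Nonempty ∧ V ⊆ O) ∧
  (∀ O : Set X, IsOpen[τ] O → O.Nonempty → ∃ V : Set X, IsOpen[σ] V ∧ V.Nonempty ∧ V ⊆ O)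

/-- A subset `A` has the Baire property in `(X, τ)` if `A = (O \ M) ∪ N` for some
`τ`-open set `O` and `τ`-meager sets `M`, `N`. -/
def HasBaireProp {X : Type*} (τ : TopologicalSpace X) (A : Set X) : Prop :=
  ∃ O M N : Set X, IsOpen[τ] O ∧ @IsMeagre X τ M ∧ @IsMeagre X τ N ∧ A = (O \ M) ∪ N

/-!
π-compatible topologies have the same nowhere dense sets: nowhere density of `s` says that every
nonempty open set can be shrunk to a nonempty open set missing `s`, and each topology can shrink
into the other. Hence they have the same meagre sets. A `τ`-open set `O` differs from its
`σ`-interior `U` by a `τ`-nowhere dense set, so `(O \ M) ∪ N` differs from `(U \ M) ∪ N` by a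
meagre set.
-/

theorem isNowhereDense_iff_forall_exists_isOpen_disjoint {X : Type*} [TopologicalSpace X]
    {s : Set X} :
    IsNowhereDense s ↔
      ∀ U, IsOpen U → U.Nonempty → ∃ V, IsOpen V ∧ V.Nonempty ∧ V ⊆ U ∧ Disjoint V s := by
  constructor
  · intro hs U hU hUne
    refine ⟨U \ closure s, hU.sdiff isClosed_closure, ?_, sdiff_subset,
      disjoint_sdiff_left.mono_right subset_closure⟩
    by_contra hempty
    rw [not_nonempty_iff_eq_empty, sdiff_eq_empty] at hempty
    exact hUne.ne_empty (eq_empty_of_subset_empty (hs ▸ interior_maximal hempty hU))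
  · intro H
    rw [IsNowhereDense, ← not_nonempty_iff_eq_empty]
    intro hne
    obtain ⟨V, hV, ⟨x, hx⟩, hVsub, hVs⟩ := H _ isOpen_interior hne
    exact (hVs.closure_right hV).notMem_of_mem_left hx (interior_subset (hVsub hx))

namespace PiCompatible

variable {X : Type*} {τ σ : TopologicalSpace X}

theorem symm (h : PiCompatible τ σ) : PiCompatible σ τ := ⟨h.2, h.1⟩

theorem isNowhereDense (h : PiCompatible τ σ) {s : Set X} (hs : @IsNowhereDense X τ s) :
    @IsNowhereDense X σ s := by
  rw [@isNowhereDense_iff_forall_exists_isOpen_disjoint X τ] at hs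
  rw [@isNowhereDense_iff_forall_exists_isOpen_disjoint X σ]
  intro U hU hUne
  obtain ⟨V, hV, hVne, hVU⟩ := h.1 U hU hUne
  obtain ⟨W, hW, hWne, hWV, hWs⟩ := hs V hV hVne
  obtain ⟨W', hW', hW'ne, hW'W⟩ := h.2 W hW hWne
  exact ⟨W', hW', hW'ne, hW'W.trans (hWV.trans hVU), hWs.mono_left hW'W⟩

theorem isMeagre (h : PiCompatible τ σ) {s : Set X} (hs : @IsMeagre X τ s) :
    @IsMeagre X σ s := by
  obtain ⟨S, hS, hc, hsub⟩ := (@isMeagre_iff_countable_union_isNowhereDense X τ s).1 hs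
  exact (@isMeagre_iff_countable_union_isNowhereDense X σ s).2
    ⟨S, fun t ht ↦ h.isNowhereDense (hS t ht), hc, hsub⟩

theorem isNowhereDense_diff_interior (h : PiCompatible τ σ) {O : Set X} (hO : IsOpen[τ] O) :
    @IsNowhereDense X τ (O \ @interior X σ O) := by
  rw [@isNowhereDense_iff_forall_exists_isOpen_disjoint X τ]
  intro U hU hUne
  rcases (U ∩ O).eq_empty_or_nonempty with hUO | hUO
  · exact ⟨U, hU, hUne, subset_rfl,
      (disjoint_iff_inter_eq_empty.2 hUO).mono_right sdiff_subset⟩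
  · obtain ⟨V, hV, hVne, hVUO⟩ := h.2 _ (@IsOpen.inter X τ _ _ hU hO) hUO
    obtain ⟨W, hW, hWne, hWV⟩ := h.1 V hV hVne
    have hWint : W ⊆ @interior X σ O :=
      hWV.trans (@interior_maximal X σ _ _ (hVUO.trans inter_subset_right) hV)
    exact ⟨W, hW, hWne, hWV.trans (hVUO.trans inter_subset_left),
      disjoint_sdiff_right.mono_left hWint⟩

theorem hasBaireProp (h : PiCompatible τ σ) {A : Set X} (hA : HasBaireProp τ A) :
    HasBaireProp σ A := by
  obtain ⟨O, M, N, hO, hM, hN, rfl⟩ := hA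
  set U := @interior X σ O
  have hD : @IsMeagre X σ (O \ U) :=
    h.isMeagre (@IsNowhereDense.isMeagre X τ _ (h.isNowhereDense_diff_interior hO))
  refine ⟨U, M, (O \ U) \ M ∪ N, @isOpen_interior X σ O, h.isMeagre hM,
    @IsMeagre.union X σ _ _ (@IsMeagre.mono X σ _ _ sdiff_subset hD) (h.isMeagre hN), ?_⟩
  have hUO : U ⊆ O := @interior_subset X σ O
  ext x
  have hxUO : x ∈ U → x ∈ O := @hUO x
  simp only [mem_union, mem_sdiff]
  tauto

end PiCompatible

theorem stmt_8 {X : Type*} (τ σ : TopologicalSpace X) (h : PiCompatible τ σ) :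
    ∀ A : Set X, HasBaireProp τ A ↔ HasBaireProp σ A :=
  fun _ ↦ ⟨h.hasBaireProp, h.symm.hasBaireProp⟩
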